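/- For every integer n ≥ 4, f(n) = f(n−1) or f(n) = f(n+1); equivalently, f(n+1) ≤ f(n−1) + 1 for n ≥ 4. -/

import Mathlib

/-! Write `A(n, k)` for `2 ^ n < C(n, k) (n + 1)` (`ChooseAboveMean n k`). Two consequences of Pascal-type identities drive
the proof: for `2k ≤ n`, `A(n + 1, k)` implies `A(n, k)` (so `f` is monotone), and for `k ≤ n`,
`A(n, k)` implies `A(n + 2, k + 1)`, since `C(n + 2, k + 1) / C(n, k) = (n + 2)(n + 1) / ((k + 1)(n + 1 - k))`
and AM-GM bounds the denominator by `(n + 2)² / 4` (so `f (n + 2) ≤ f n + 1`). Starting from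
`A(3, 1)` and `A(4, 1)`, the second implication also shows `f n < n / 2`, which keeps both
implications applicable to `k = f n`. -/

noncomputable def f (n : ℕ) : ℕ :=
  sInf {k : ℕ | 0 < k ∧ (n.choose k : ℝ) > 2 ^ n / (n + 1)}

def ChooseAboveMean (n k : ℕ) : Prop :=
  2 ^ n < n.choose k * (n + 1)

theorem ChooseAboveMean.of_succ {n k : ℕ} (hk : 2 * k ≤ n) (h : ChooseAboveMean (n + 1) k) :
    ChooseAboveMean n k := by
  unfold ChooseAboveMean at *
  have hpascal : n.choose k * (n + 1) = (n + 1).choose k * (n + 1 - k) := n.choose_mul_succ_eq k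
  have hle : n + 2 ≤ 2 * (n + 1 - k) := by omega
  have : 2 ^ n * (2 * (n + 2)) < n.choose k * (n + 1) * (2 * (n + 2)) :=
    calc 2 ^ n * (2 * (n + 2)) = 2 ^ (n + 1) * (n + 2) := by ring
      _ < (n + 1).choose k * (n + 2) * (n + 2) := by gcongr
      _ ≤ (n + 1).choose k * (2 * (n + 1 - k)) * (n + 2) := by gcongr
      _ = n.choose k * (n + 1) * (2 * (n + 2)) := by rw [hpascal]; ring
  exact Nat.lt_of_mul_lt_mul_right this

theorem ChooseAboveMean.succ_succ {n k : ℕ} (hk : k ≤ n) (h : ChooseAboveMean n k) :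
    ChooseAboveMean (n + 2) (k + 1) := by
  unfold ChooseAboveMean at *
  obtain ⟨j, rfl⟩ : ∃ j, n = k + j := ⟨n - k, by omega⟩
  have hpascal : (k + j + 2).choose (k + 1) * ((k + 1) * (j + 1)) =
      (k + j + 2) * (k + j + 1) * (k + j).choose k := by
    have h₁ := Nat.add_one_mul_choose_eq (k + j + 1) k
    have h₂ := Nat.choose_mul_succ_eq (k + j) k
    rw [show k + j + 1 - k = j + 1 by omega] at h₂
    calc _ = ((k + j + 2).choose (k + 1) * (k + 1)) * (j + 1) := by ring
      _ = (k + j + 2) * ((k + j + 1).choose k * (j + 1)) := by rw [← h₁]; ring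
      _ = _ := by rw [← h₂]; ring
  have hamgm : 4 * ((k + 1) * (j + 1)) ≤ (k + j + 2) ^ 2 := by
    nlinarith [sq_nonneg ((k : ℤ) - j)]
  refine Nat.lt_of_mul_lt_mul_right (a := (k + 1) * (j + 1)) ?_
  calc 2 ^ (k + j + 2) * ((k + 1) * (j + 1)) = 2 ^ (k + j) * (4 * ((k + 1) * (j + 1))) := by ring
    _ ≤ 2 ^ (k + j) * (k + j + 2) ^ 2 := by gcongr
    _ < (k + j).choose k * (k + j + 1) * (k + j + 2) ^ 2 := by gcongr
    _ ≤ (k + j).choose k * (k + j + 1) * ((k + j + 2) * (k + j + 3)) := by rw [sq]; gcongr; omega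
    _ = (k + j + 2).choose (k + 1) * (k + j + 2 + 1) * ((k + 1) * (j + 1)) := by
      rw [mul_right_comm _ _ ((k + 1) * (j + 1)), hpascal]; ring

theorem chooseAboveMean_half : ∀ n : ℕ, ChooseAboveMean (n + 3) (n / 2 + 1)
  | 0 => by unfold ChooseAboveMean; decide
  | 1 => by unfold ChooseAboveMean; decide
  | n + 2 => by
    rw [show (n + 2) / 2 + 1 = n / 2 + 1 + 1 by omega]
    exact (chooseAboveMean_half n).succ_succ (by omega)

theorem f_eq_sInf (n : ℕ) : f n = sInf {k : ℕ | 0 < k ∧ ChooseAboveMean n k} := by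
  unfold f ChooseAboveMean
  congr! 4 with k
  rw [gt_iff_lt, div_lt_iff₀ (by positivity)]
  exact_mod_cast Iff.rfl

theorem f_le {n k : ℕ} (hk : 0 < k) (h : ChooseAboveMean n k) : f n ≤ k :=
  f_eq_sInf n ▸ Nat.sInf_le ⟨hk, h⟩

theorem f_spec {n : ℕ} (hn : 3 ≤ n) : 0 < f n ∧ ChooseAboveMean n (f n) ∧ 2 * f n < n := by
  obtain ⟨m, rfl⟩ : ∃ m, n = m + 3 := ⟨n - 3, by omega⟩
  have hhalf := chooseAboveMean_half m
  have hmem := Nat.sInf_mem (s := {k | 0 < k ∧ ChooseAboveMean (m + 3) k}) ⟨_, by omega, hhalf⟩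
  rw [← f_eq_sInf] at hmem
  have := f_le (by omega) hhalf
  exact ⟨hmem.1, hmem.2, by omega⟩

theorem f_le_f_succ {n : ℕ} (hn : 3 ≤ n) : f n ≤ f (n + 1) := by
  obtain ⟨hpos, habove, hlt⟩ := f_spec (n := n + 1) (by omega)
  exact f_le hpos (habove.of_succ (by omega))

theorem f_add_two_le {n : ℕ} (hn : 3 ≤ n) : f (n + 2) ≤ f n + 1 := by
  obtain ⟨-, habove, hlt⟩ := f_spec hn
  exact f_le (by omega) (habove.succ_succ (by omega))

theorem f_eq_pred_or_succ (n : ℕ) (hn : 4 ≤ n) :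
    (f n = f (n - 1) ∨ f n = f (n + 1)) ∧ f (n + 1) ≤ f (n - 1) + 1 := by
  obtain ⟨m, rfl⟩ : ∃ m, n = m + 1 := ⟨n - 1, by omega⟩
  have h₁ : f m ≤ f (m + 1) := f_le_f_succ (by omega)
  have h₂ : f (m + 1) ≤ f (m + 2) := f_le_f_succ (by omega)
  have h₃ : f (m + 2) ≤ f m + 1 := f_add_two_le (by omega)
  show (f (m + 1) = f m ∨ f (m + 1) = f (m + 2)) ∧ f (m + 2) ≤ f m + 1
  omega
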